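/- The set A_μ = { g ∈ G : lim_{n→∞} μ^{*n}(g)/μ^{*n}(e) = 1 } is a subgroup of G. -/

import Mathlib

open Filter Topology
open scoped Classical

/-- Convolution of two real-valued functions on a discrete group. -/
noncomputable def conv {G : Type*} [Group G] (μ τ : G → ℝ) : G → ℝ :=
  fun y => ∑' x : G, μ x * τ (x⁻¹ * y)

/-- `n`-fold convolution power, with `μ^{*0}` the Dirac mass at the identity. -/
noncomputable def convPow {G : Type*} [Group G] (μ : G → ℝ) : ℕ → G → ℝ
  | 0 => fun x => if x = 1 then 1 else 0
  | n + 1 => conv (convPow μ n) μ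

/-- `μ` is a probability measure on the discrete group `G`. -/
def IsProb {G : Type*} [Group G] (μ : G → ℝ) : Prop :=
  (∀ x, 0 ≤ μ x) ∧ ∑' x : G, μ x = 1

/-- `μ` is symmetric. -/
def MeasSymm {G : Type*} [Group G] (μ : G → ℝ) : Prop := ∀ x, μ x⁻¹ = μ x

/-- `μ` is aperiodic: `gcd { n ≥ 1 | μ^{*n}(e) > 0 } = 1`. -/
def IsAperiodic {G : Type*} [Group G] (μ : G → ℝ) : Prop :=
  ∀ d : ℕ, (∀ n : ℕ, 1 ≤ n → 0 < convPow μ n 1 → d ∣ n) → d = 1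

/-- The support of `μ` generates `G`. -/
def GeneratingSupport {G : Type*} [Group G] (μ : G → ℝ) : Prop :=
  Subgroup.closure {x : G | 0 < μ x} = ⊤

/-- The set `A_μ = { g | μ^{*n}(g)/μ^{*n}(e) → 1 }`. -/
def Amu {G : Type*} [Group G] (μ : G → ℝ) : Set G :=
  {g | Tendsto (fun n => convPow μ n g / convPow μ n 1) atTop (𝓝 1)}

/-- ℓ² inner product. -/
noncomputable def l2inner {G : Type*} (f h : G → ℝ) : ℝ := ∑' x : G, f x * h x

/-- ℓ² norm. -/
noncomputable def l2norm {G : Type*} (f : G → ℝ) : ℝ :=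
  Real.sqrt (∑' x : G, (f x) ^ 2)

/-- Left translation: `(g · f)(x) = f (g⁻¹ x)`. -/
def ltrans {G : Type*} [Group G] (g : G) (f : G → ℝ) : G → ℝ := fun x => f (g⁻¹ * x)

/-- The normalized convolution powers `ξ_n = μ^{*n}/‖μ^{*n}‖₂`. -/
noncomputable def xi {G : Type*} [Group G] (μ : G → ℝ) (n : ℕ) : G → ℝ :=
  fun x => convPow μ n x / l2norm (convPow μ n)

/-- Reiter-type characterization of amenability: a sequence of almost-invariant
unit vectors in `ℓ²(K)`. -/
def ReiterAmenable (K : Type*) [Group K] : Prop :=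
  ∃ ψ : ℕ → K → ℝ, (∀ n, ∑' x : K, (ψ n x) ^ 2 = 1) ∧
    ∀ k : K, Tendsto
      (fun n => Real.sqrt (∑' x : K, (ψ n (k⁻¹ * x) - ψ n x) ^ 2)) atTop (𝓝 0)


/-!
Write `p_n = μ^{*n}`. For symmetric `μ` and `f = p_m`, `p_{2m}(g) = ⟨f, f(g⁻¹ ·)⟩` in
`ℓ²(G)`, so by Cauchy–Schwarz, uniformly in `u`,
`|p_{2m}(u g) - p_{2m}(u)| ≤ ‖f‖ ‖f(g⁻¹ ·) - f‖ = p_{2m}(e) √(2 - 2 p_{2m}(g)/p_{2m}(e))`.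
Thus every `g ∈ A_μ` moves `p_{2m}` by `o(p_{2m}(e))` under right translation, uniformly, and
this property is obviously stable under products. Conversely it forces `g ∈ A_μ`: at even times
take `u = e`; aperiodicity gives an odd `k` with `p_k(e) > 0`, and averaging against `p_k`
transfers the estimate to the times `k + 2m`, since `p_{k+2m}(e) ≥ p_k(e) p_{2m}(e)`.
Inverses are handled by the symmetry `p_n(g⁻¹) = p_n(g)`.
-/

section Translate

variable {G α : Type*} [Group G] [AddCommMonoid α] [TopologicalSpace α]

lemma Summable.comp_mul_left {φ : G → α} (hφ : Summable φ) (a : G) :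
    Summable fun x => φ (a * x) :=
  (Equiv.mulLeft a).summable_iff.2 hφ

lemma tsum_comp_mul_left (φ : G → α) (a : G) : ∑' x, φ (a * x) = ∑' x, φ x :=
  (Equiv.mulLeft a).tsum_eq φ

end Translate

section Convolution

variable {G : Type*} [Group G] {f g h : G → ℝ}

lemma summable_mul_comp_inv_mul (hf : Summable f) (hg : Summable g) (hf0 : 0 ≤ f)
    (hg0 : 0 ≤ g) : Summable fun p : G × G => f p.1 * g (p.1⁻¹ * p.2) :=
  (Equiv.prodShear (Equiv.refl G) Equiv.mulLeft).summable_iff.1 <|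
    (hf.mul_of_nonneg hg hf0 hg0).congr fun p => by simp

lemma tsum_conv (hf : Summable f) (hg : Summable g) (hf0 : 0 ≤ f) (hg0 : 0 ≤ g) :
    ∑' y, conv f g y = (∑' x, f x) * ∑' x, g x := by
  have hinner : ∀ x, ∑' y, f x * g (x⁻¹ * y) = f x * ∑' z, g z := fun x => by
    rw [tsum_mul_left, tsum_comp_mul_left g x⁻¹]
  calc ∑' y, conv f g y = ∑' x, ∑' y, f x * g (x⁻¹ * y) :=
        (summable_mul_comp_inv_mul hf hg hf0 hg0).tsum_comm
    _ = (∑' x, f x) * ∑' x, g x := by simp_rw [hinner, tsum_mul_right]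

lemma conv_assoc (hf : Summable f) (hg : Summable g) (hh : Summable h) (hf0 : 0 ≤ f)
    (hg0 : 0 ≤ g) (hh0 : 0 ≤ h) : conv (conv f g) h = conv f (conv g h) := by
  funext y
  have hbound : ∀ p : G × G, f p.1 * g (p.1⁻¹ * p.2) * h (p.2⁻¹ * y)
      ≤ f p.1 * g (p.1⁻¹ * p.2) * ∑' z, h z := fun p =>
    mul_le_mul_of_nonneg_left (hh.le_tsum _ fun z _ => hh0 z) (mul_nonneg (hf0 _) (hg0 _))
  have hsum : Summable fun p : G × G => f p.1 * g (p.1⁻¹ * p.2) * h (p.2⁻¹ * y) :=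
    .of_nonneg_of_le (fun p => mul_nonneg (mul_nonneg (hf0 _) (hg0 _)) (hh0 _)) hbound
      ((summable_mul_comp_inv_mul hf hg hf0 hg0).mul_right _)
  have hinner : ∀ x, ∑' z, f x * g (x⁻¹ * z) * h (z⁻¹ * y)
      = f x * ∑' w, g w * h (w⁻¹ * (x⁻¹ * y)) := fun x => by
    rw [← tsum_mul_left, ← tsum_comp_mul_left _ x]
    congr 1 with w
    simp [mul_assoc]
  calc conv (conv f g) h y = ∑' z, ∑' x, f x * g (x⁻¹ * z) * h (z⁻¹ * y) := by
        simp only [conv, tsum_mul_right]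
    _ = ∑' x, ∑' z, f x * g (x⁻¹ * z) * h (z⁻¹ * y) := hsum.tsum_comm
    _ = conv f (conv g h) y := by simp only [hinner, conv]

lemma conv_apply_inv (f g : G → ℝ) (y : G) :
    conv f g y⁻¹ = conv (fun x => g x⁻¹) (fun x => f x⁻¹) y := by
  simp only [conv]
  conv_rhs => rw [← tsum_comp_mul_left _ y]
  congr 1 with x
  simp [mul_comm]

end Convolution

section ConvPow

variable {G : Type*} [Group G] {μ f g : G → ℝ}

lemma IsProb.summable (hf : IsProb f) : Summable f :=
  by_contra fun h => by simpa [tsum_eq_zero_of_not_summable h] using hf.2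

lemma IsProb.le_one (hf : IsProb f) (x : G) : f x ≤ 1 :=
  hf.2 ▸ hf.summable.le_tsum x fun y _ => hf.1 y

lemma IsProb.summable_sq (hf : IsProb f) : Summable fun x => f x ^ 2 :=
  .of_nonneg_of_le (fun x => sq_nonneg _)
    (fun x => by nlinarith [hf.1 x, hf.le_one x]) hf.summable

lemma isProb_conv (hf : IsProb f) (hg : IsProb g) : IsProb (conv f g) :=
  ⟨fun _ => tsum_nonneg fun x => mul_nonneg (hf.1 x) (hg.1 _), by
    rw [tsum_conv hf.summable hg.summable hf.1 hg.1, hf.2, hg.2, one_mul]⟩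

lemma IsProb.summable_mul_comp_inv_mul (hf : IsProb f) (hg : IsProb g) (y : G) :
    Summable fun x => f x * g (x⁻¹ * y) :=
  .of_nonneg_of_le (fun x => mul_nonneg (hf.1 x) (hg.1 _))
    (fun x => mul_le_of_le_one_right (hf.1 x) (hg.le_one _)) hf.summable

lemma IsProb.mul_le_conv (hf : IsProb f) (hg : IsProb g) (x y : G) :
    f x * g (x⁻¹ * y) ≤ conv f g y :=
  (hf.summable_mul_comp_inv_mul hg y).le_tsum x fun z _ => mul_nonneg (hf.1 z) (hg.1 _)

lemma IsProb.abs_conv_mul_sub_le (hf : IsProb f) (hg : IsProb g) {w : G} {C : ℝ}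
    (hC : ∀ u, |g (u * w) - g u| ≤ C) (y : G) : |conv f g (y * w) - conv f g y| ≤ C := by
  have hdiff : conv f g (y * w) - conv f g y
      = ∑' x, f x * (g (x⁻¹ * y * w) - g (x⁻¹ * y)) := by
    simp only [conv, mul_sub, mul_assoc]
    exact ((hf.summable_mul_comp_inv_mul hg _).tsum_sub (hf.summable_mul_comp_inv_mul hg _)).symm
  have hsum : Summable fun x => f x * C := hf.summable.mul_right C
  have hterm : ∀ x, |f x * (g (x⁻¹ * y * w) - g (x⁻¹ * y))| ≤ f x * C := fun x => by
    rw [abs_mul, abs_of_nonneg (hf.1 x)]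
    exact mul_le_mul_of_nonneg_left (hC _) (hf.1 x)
  have htotal : ∑' x, f x * C = C := by rw [tsum_mul_right, hf.2, one_mul]
  rw [hdiff, abs_le, ← htotal, ← tsum_neg]
  constructor
  · exact hsum.neg.tsum_le_tsum (fun x => neg_le_of_abs_le (hterm x))
      (hsum.of_norm_bounded fun x => hterm x)
  · exact (hsum.of_norm_bounded fun x => hterm x).tsum_le_tsum
      (fun x => le_of_abs_le (hterm x)) hsum

lemma conv_convPow_zero (f : G → ℝ) : conv f (convPow μ 0) = f := by
  funext y
  refine (tsum_eq_single y fun x hx => ?_).trans (by simp [convPow])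
  simp [convPow, inv_mul_eq_one, hx]

lemma convPow_one : convPow μ 1 = μ := by
  funext y
  refine (tsum_eq_single 1 fun x hx => ?_).trans (by simp [convPow])
  simp [convPow, hx]

lemma isProb_convPow (hμ : IsProb μ) : ∀ n, IsProb (convPow μ n)
  | 0 => ⟨fun x => by simp only [convPow]; split_ifs <;> norm_num, by simp [convPow]⟩
  | n + 1 => isProb_conv (isProb_convPow hμ n) hμ

lemma convPow_add (hμ : IsProb μ) (m : ℕ) :
    ∀ n, convPow μ (m + n) = conv (convPow μ m) (convPow μ n)
  | 0 => (conv_convPow_zero _).symm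
  | n + 1 => by
    have hm := isProb_convPow hμ m
    have hn := isProb_convPow hμ n
    rw [← add_assoc, convPow, convPow, convPow_add hμ m n,
      conv_assoc hm.summable hn.summable hμ.summable hm.1 hn.1 hμ.1]

lemma measSymm_convPow (hμ : IsProb μ) (hs : MeasSymm μ) : ∀ n, MeasSymm (convPow μ n)
  | 0 => fun x => by simp [convPow]
  | n + 1 => fun x => by
    have hs' : (fun y => μ y⁻¹) = μ := funext hs
    have ih : (fun y => convPow μ n y⁻¹) = convPow μ n := funext (measSymm_convPow hμ hs n)
    have hadd := convPow_add hμ 1 n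
    rw [convPow_one, add_comm] at hadd
    show conv (convPow μ n) μ x⁻¹ = _
    rw [conv_apply_inv, hs', ih, hadd]

lemma convPow_two_mul_apply (hμ : IsProb μ) (hs : MeasSymm μ) (m : ℕ) (w : G) :
    convPow μ (2 * m) w = ∑' x, convPow μ m x * convPow μ m (w⁻¹ * x) := by
  rw [two_mul, convPow_add hμ]
  refine tsum_congr fun x => ?_
  rw [← measSymm_convPow hμ hs m (x⁻¹ * w), mul_inv_rev, inv_inv]

lemma convPow_two_mul_one (hμ : IsProb μ) (hs : MeasSymm μ) (m : ℕ) :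
    convPow μ (2 * m) 1 = ∑' x, convPow μ m x ^ 2 := by
  simp [convPow_two_mul_apply hμ hs, sq]

lemma convPow_two_mul_one_pos (hμ : IsProb μ) (hs : MeasSymm μ) (m : ℕ) :
    0 < convPow μ (2 * m) 1 := by
  obtain ⟨x, hx⟩ : ∃ x, convPow μ m x ≠ 0 := by
    by_contra! h
    simpa [h] using (isProb_convPow hμ m).2
  rw [convPow_two_mul_one hμ hs]
  exact (isProb_convPow hμ m).summable_sq.tsum_pos (fun y => sq_nonneg _) x (by positivity)

end ConvPow

section SquareSummable

variable {ι : Type*} {f g : ι → ℝ}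

lemma summable_mul_of_summable_sq (hf : Summable fun x => f x ^ 2)
    (hg : Summable fun x => g x ^ 2) : Summable fun x => f x * g x :=
  ((hf.add hg).mul_left (1 / 2)).of_norm_bounded fun x => by
    rw [Real.norm_eq_abs, abs_mul]
    nlinarith [sq_nonneg (|f x| - |g x|), sq_abs (f x), sq_abs (g x)]

lemma summable_sub_sq (hf : Summable fun x => f x ^ 2) (hg : Summable fun x => g x ^ 2) :
    Summable fun x => (f x - g x) ^ 2 :=
  ((hf.add hg).sub ((summable_mul_of_summable_sq hf hg).mul_left 2)).congr fun x => by ring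

lemma tsum_mul_le_sqrt_mul_sqrt (hf : Summable fun x => f x ^ 2)
    (hg : Summable fun x => g x ^ 2) :
    ∑' x, f x * g x ≤ √(∑' x, f x ^ 2) * √(∑' x, g x ^ 2) :=
  (summable_mul_of_summable_sq hf hg).tsum_le_of_sum_le fun s =>
    (Real.sum_mul_le_sqrt_mul_sqrt s f g).trans <|
      mul_le_mul (Real.sqrt_le_sqrt (hf.sum_le_tsum s fun _ _ => sq_nonneg _))
        (Real.sqrt_le_sqrt (hg.sum_le_tsum s fun _ _ => sq_nonneg _))
        (Real.sqrt_nonneg _) (Real.sqrt_nonneg _)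

lemma abs_tsum_mul_le_sqrt_mul_sqrt (hf : Summable fun x => f x ^ 2)
    (hg : Summable fun x => g x ^ 2) :
    |∑' x, f x * g x| ≤ √(∑' x, f x ^ 2) * √(∑' x, g x ^ 2) := by
  have hf' : Summable fun x => (-f x) ^ 2 := by simpa using hf
  refine abs_le'.2 ⟨tsum_mul_le_sqrt_mul_sqrt hf hg, ?_⟩
  simpa [tsum_neg] using tsum_mul_le_sqrt_mul_sqrt hf' hg

end SquareSummable

section Translation

variable {G : Type*} [Group G] {f : G → ℝ}

lemma tsum_sq_comp_mul_left_sub (hf : Summable fun x => f x ^ 2) (a : G) :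
    ∑' x, (f (a * x) - f x) ^ 2 = 2 * (∑' x, f x ^ 2) - 2 * ∑' x, f x * f (a * x) := by
  have hfa : Summable fun x => f (a * x) ^ 2 := hf.comp_mul_left a
  have hcross := (summable_mul_of_summable_sq hf hfa).mul_left 2
  calc ∑' x, (f (a * x) - f x) ^ 2
      = ∑' x, ((f (a * x) ^ 2 + f x ^ 2) - 2 * (f x * f (a * x))) := tsum_congr fun x => by ring
    _ = 2 * (∑' x, f x ^ 2) - 2 * ∑' x, f x * f (a * x) := by
      rw [(hfa.add hf).tsum_sub hcross, hfa.tsum_add hf, tsum_mul_left,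
        tsum_comp_mul_left (fun x => f x ^ 2)]
      ring

/-- The second square root is `‖f (a b⁻¹ ·) - f‖₂`. -/
lemma abs_tsum_mul_comp_mul_left_sub_le (hf : Summable fun x => f x ^ 2) (a b : G) :
    |∑' x, f x * f (a * x) - ∑' x, f x * f (b * x)|
      ≤ √(∑' x, f x ^ 2)
        * √(2 * (∑' x, f x ^ 2) - 2 * ∑' x, f x * f (a * b⁻¹ * x)) := by
  have hfa : Summable fun x => f (a * x) ^ 2 := hf.comp_mul_left a
  have hfb : Summable fun x => f (b * x) ^ 2 := hf.comp_mul_left b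
  have hdefect : ∑' x, (f (a * x) - f (b * x)) ^ 2 = ∑' x, (f (a * b⁻¹ * x) - f x) ^ 2 := by
    rw [← tsum_comp_mul_left (fun x => (f (a * b⁻¹ * x) - f x) ^ 2) b]
    simp [mul_assoc]
  have hsplit : ∑' x, f x * f (a * x) - ∑' x, f x * f (b * x)
      = ∑' x, f x * (f (a * x) - f (b * x)) := by
    rw [← (summable_mul_of_summable_sq hf hfa).tsum_sub (summable_mul_of_summable_sq hf hfb)]
    simp only [mul_sub]
  rw [hsplit, ← tsum_sq_comp_mul_left_sub hf, ← hdefect]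
  exact abs_tsum_mul_le_sqrt_mul_sqrt hf (summable_sub_sq hfa hfb)

end Translation

lemma tendsto_of_tendsto_two_mul_of_odd {α : Type*} {f : ℕ → α} {l : Filter α} {k : ℕ}
    (hk : Odd k) (heven : Tendsto (fun m => f (2 * m)) atTop l)
    (hodd : Tendsto (fun m => f (k + 2 * m)) atTop l) : Tendsto f atTop l := by
  intro s hs
  rw [mem_map]
  have hhalf : Tendsto (fun n => n / 2) atTop atTop := Nat.tendsto_div_const_atTop two_ne_zero
  have hhalf' : Tendsto (fun n => (n - k) / 2) atTop atTop :=
    hhalf.comp (tendsto_sub_atTop_nat k)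
  filter_upwards [hhalf.eventually (heven.eventually_mem hs),
    hhalf'.eventually (hodd.eventually_mem hs), eventually_ge_atTop k] with n he ho hkn
  obtain ⟨i, rfl⟩ := hk
  obtain ⟨r, rfl | rfl⟩ := Nat.even_or_odd' n
  · simpa using he
  · have hsplit : 2 * i + 1 + 2 * ((2 * r + 1 - (2 * i + 1)) / 2) = 2 * r + 1 := by omega
    rwa [hsplit] at ho

section AlmostInvariance

variable {G : Type*} [Group G] {μ : G → ℝ}

lemma abs_convPow_two_mul_mul_sub_le (hμ : IsProb μ) (hs : MeasSymm μ) (m : ℕ) (u g : G) :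
    |convPow μ (2 * m) (u * g) - convPow μ (2 * m) u|
      ≤ √(convPow μ (2 * m) 1) * √(2 * convPow μ (2 * m) 1 - 2 * convPow μ (2 * m) g) := by
  have h := abs_tsum_mul_comp_mul_left_sub_le (isProb_convPow hμ m).summable_sq (u * g)⁻¹ u⁻¹
  rwa [show (u * g)⁻¹ * u⁻¹⁻¹ = g⁻¹ by group, ← convPow_two_mul_one hμ hs,
    ← convPow_two_mul_apply hμ hs, ← convPow_two_mul_apply hμ hs,
    ← convPow_two_mul_apply hμ hs] at h

def IsUnifAlmostInvariant (μ : G → ℝ) (w : G) : Prop :=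
  ∃ c : ℕ → ℝ, Tendsto c atTop (𝓝 0) ∧
    ∀ m u, |convPow μ (2 * m) (u * w) - convPow μ (2 * m) u| ≤ convPow μ (2 * m) 1 * c m

lemma isUnifAlmostInvariant_one : IsUnifAlmostInvariant μ 1 :=
  ⟨0, tendsto_const_nhds, fun m u => by simp⟩

lemma IsUnifAlmostInvariant.mul {v w : G} (hv : IsUnifAlmostInvariant μ v)
    (hw : IsUnifAlmostInvariant μ w) : IsUnifAlmostInvariant μ (v * w) := by
  obtain ⟨c, hc, hcv⟩ := hv
  obtain ⟨d, hd, hdw⟩ := hw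
  refine ⟨fun m => c m + d m, by simpa using hc.add hd, fun m u => ?_⟩
  calc |convPow μ (2 * m) (u * (v * w)) - convPow μ (2 * m) u|
      = |(convPow μ (2 * m) (u * v * w) - convPow μ (2 * m) (u * v))
          + (convPow μ (2 * m) (u * v) - convPow μ (2 * m) u)| := by
        rw [mul_assoc, sub_add_sub_cancel]
    _ ≤ |convPow μ (2 * m) (u * v * w) - convPow μ (2 * m) (u * v)|
          + |convPow μ (2 * m) (u * v) - convPow μ (2 * m) u| := abs_add_le _ _
    _ ≤ convPow μ (2 * m) 1 * d m + convPow μ (2 * m) 1 * c m :=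
        add_le_add (hdw m (u * v)) (hcv m u)
    _ = convPow μ (2 * m) 1 * (c m + d m) := by ring

lemma isUnifAlmostInvariant_of_mem_Amu (hμ : IsProb μ) (hs : MeasSymm μ) {g : G}
    (hg : g ∈ Amu μ) : IsUnifAlmostInvariant μ g := by
  refine ⟨fun m => √(2 - 2 * (convPow μ (2 * m) g / convPow μ (2 * m) 1)), ?_,
    fun m u => ?_⟩
  · have hratio : Tendsto (fun m => convPow μ (2 * m) g / convPow μ (2 * m) 1) atTop (𝓝 1) :=
      hg.comp (tendsto_id.const_mul_atTop' two_pos)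
    have hcont : Continuous fun x : ℝ => √(2 - 2 * x) := by fun_prop
    simpa [Function.comp_def] using (hcont.tendsto 1).comp hratio
  · have hpos := convPow_two_mul_one_pos hμ hs m
    refine (abs_convPow_two_mul_mul_sub_le hμ hs m u g).trans_eq ?_
    rw [show 2 * convPow μ (2 * m) 1 - 2 * convPow μ (2 * m) g = convPow μ (2 * m) 1
        * (2 - 2 * (convPow μ (2 * m) g / convPow μ (2 * m) 1)) by field_simp,
      Real.sqrt_mul hpos.le, ← mul_assoc, Real.mul_self_sqrt hpos.le]

lemma exists_odd_convPow_one_pos (haper : IsAperiodic μ) :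
    ∃ k, Odd k ∧ 0 < convPow μ k 1 := by
  by_contra! h
  have : 2 = 1 := haper 2 fun n _ hn =>
    ((Nat.even_or_odd n).resolve_right fun ho => (h n ho).not_gt hn).two_dvd
  omega

lemma tendsto_convPow_add_two_mul_div (hμ : IsProb μ) (hs : MeasSymm μ) {w : G}
    (hw : IsUnifAlmostInvariant μ w) {j : ℕ} (hj : 0 < convPow μ j 1) :
    Tendsto (fun m => convPow μ (j + 2 * m) w / convPow μ (j + 2 * m) 1) atTop (𝓝 1) := by
  obtain ⟨c, hc, hcw⟩ := hw
  have hbound : ∀ m, |convPow μ (j + 2 * m) w / convPow μ (j + 2 * m) 1 - 1|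
      ≤ c m / convPow μ j 1 := fun m => by
    have hμj := isProb_convPow hμ j
    have hμ2m := isProb_convPow hμ (2 * m)
    have hp := convPow_two_mul_one_pos hμ hs m
    have hc0 : 0 ≤ c m := nonneg_of_mul_nonneg_right ((abs_nonneg _).trans (hcw m 1)) hp
    have hlower : convPow μ j 1 * convPow μ (2 * m) 1 ≤ convPow μ (j + 2 * m) 1 := by
      simpa [convPow_add hμ] using hμj.mul_le_conv hμ2m 1 1
    have hdiff : |convPow μ (j + 2 * m) w - convPow μ (j + 2 * m) 1|
        ≤ convPow μ (2 * m) 1 * c m := by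
      simpa [convPow_add hμ] using hμj.abs_conv_mul_sub_le hμ2m (hcw m) 1
    have hpos : 0 < convPow μ (j + 2 * m) 1 := (mul_pos hj hp).trans_le hlower
    rw [div_sub_one hpos.ne', abs_div, abs_of_pos hpos, div_le_div_iff₀ hpos hj]
    nlinarith [mul_le_mul_of_nonneg_left hlower hc0]
  refine tendsto_iff_norm_sub_tendsto_zero.2 (squeeze_zero (fun _ => norm_nonneg _) hbound ?_)
  simpa using hc.div_const (convPow μ j 1)

lemma mem_Amu_of_isUnifAlmostInvariant (hμ : IsProb μ) (hs : MeasSymm μ)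
    (haper : IsAperiodic μ) {w : G} (hw : IsUnifAlmostInvariant μ w) : w ∈ Amu μ := by
  obtain ⟨k, hk, hkpos⟩ := exists_odd_convPow_one_pos haper
  refine tendsto_of_tendsto_two_mul_of_odd hk ?_ (tendsto_convPow_add_two_mul_div hμ hs hw hkpos)
  simpa using tendsto_convPow_add_two_mul_div hμ hs hw (j := 0) (by simp [convPow])

lemma inv_mem_Amu (hμ : IsProb μ) (hs : MeasSymm μ) {g : G} (hg : g ∈ Amu μ) :
    g⁻¹ ∈ Amu μ := by
  simpa only [Amu, Set.mem_ofPred_eq, measSymm_convPow hμ hs _ g] using hg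

end AlmostInvariance

theorem stmt3_general {G : Type*} [Group G] (μ : G → ℝ)
    (hprob : IsProb μ) (hsymm : MeasSymm μ) (haper : IsAperiodic μ) :
    ∃ H : Subgroup G, (H : Set G) = Amu μ := by
  refine ⟨{ carrier := Amu μ
            mul_mem' := ?mul
            one_mem' := ?one
            inv_mem' := inv_mem_Amu hprob hsymm }, rfl⟩
  case one => exact mem_Amu_of_isUnifAlmostInvariant hprob hsymm haper isUnifAlmostInvariant_one
  case mul =>
    intro g h hg hh
    exact mem_Amu_of_isUnifAlmostInvariant hprob hsymm haper
      ((isUnifAlmostInvariant_of_mem_Amu hprob hsymm hg).mul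
        (isUnifAlmostInvariant_of_mem_Amu hprob hsymm hh))

theorem stmt3 {G : Type*} [Group G] [Group.FG G] (μ : G → ℝ)
    (hprob : IsProb μ) (hsymm : MeasSymm μ) (haper : IsAperiodic μ)
    (hgen : GeneratingSupport μ) :
    ∃ H : Subgroup G, (H : Set G) = Amu μ :=
  stmt3_general μ hprob hsymm haper
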